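/- Let h ≥ 1 and suppose h divides a. Any tiling of the rectangle R_{a×b} by horizontal bars of length h and vertical bars of length v in which, within each block of h consecutive columns {kh, ..., (k+1)h−1}, all columns have the same number of vertical bars, decomposes: every horizontal bar lies entirely within one block of columns {kh,...,(k+1)h−1}, i.e., the tiling restricts to a tiling of each vertical strip of width h. -/
import Mathlib


/-- A bar placement in the plane grid `ℕ × ℕ`: `(true, i, j)` is a vertical bar
anchored at `(i,j)` (its topmost cell), `(false, i, j)` a horizontal bar anchored at
`(i,j)` (its leftmost cell). -/
abbrev BarP := Bool × ℕ × ℕ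

/-- The cells covered by a bar: a horizontal bar of length `h` at `(i,j)` covers
`(i,j),…,(i+h-1,j)`; a vertical bar of length `v` at `(i,j)` covers
`(i,j),…,(i,j+v-1)`. -/
def barCells (h v : ℕ) (t : BarP) : Finset (ℕ × ℕ) :=
  if t.1 then (Finset.range v).image (fun s => (t.2.1, t.2.2 + s))
  else (Finset.range h).image (fun s => (t.2.1 + s, t.2.2))

/-- `T` is a tiling of the region `R` by horizontal bars of length `h` and vertical
bars of length `v`: all bars lie inside `R` and every cell of `R` is covered by
exactly one bar. -/
def IsTilingOf (h v : ℕ) (R : Finset (ℕ × ℕ)) (T : Finset BarP) : Prop :=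
  (∀ t ∈ T, barCells h v t ⊆ R) ∧
  ∀ c ∈ R, ∃! t, t ∈ T ∧ c ∈ barCells h v t

/-- Number of vertical bars of `T` lying in column `i`. -/
def vertCount (T : Finset BarP) (i : ℕ) : ℕ :=
  (T.filter (fun t => t.1 = true ∧ t.2.1 = i)).card

/-- Number of horizontal bars of `T` lying in row `j`. -/
def horizCount (T : Finset BarP) (j : ℕ) : ℕ :=
  (T.filter (fun t => t.1 = false ∧ t.2.2 = j)).card

/-- Number of horizontal bars of `T` whose leftmost cell is in column `i`. -/
def horizStartCount (T : Finset BarP) (i : ℕ) : ℕ :=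
  (T.filter (fun t => t.1 = false ∧ t.2.1 = i)).card

/-- The rectangle `R_{a×b} = {0,…,a-1} × {0,…,b-1}`. -/
def rectR (a b : ℕ) : Finset (ℕ × ℕ) := Finset.range a ×ˢ Finset.range b

/-- number of horizontal bars covering column `i`. -/
def covCount (h : ℕ) (T : Finset BarP) (i : ℕ) : ℕ :=
  (T.filter (fun t => t.1 = false ∧ t.2.1 ≤ i ∧ i < t.2.1 + h)).card

lemma mem_barCells_true {h v x y : ℕ} {c : ℕ × ℕ} :
    c ∈ barCells h v (true, x, y) ↔ ∃ s, s < v ∧ c = (x, y + s) := by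
  simp [barCells, eq_comm]

lemma mem_barCells_false {h v x y : ℕ} {c : ℕ × ℕ} :
    c ∈ barCells h v (false, x, y) ↔ ∃ s, s < h ∧ c = (x + s, y) := by
  simp [barCells, eq_comm]

lemma colcount {a b h v : ℕ} (hh : 1 ≤ h) {T : Finset BarP}
    (hT : IsTilingOf h v (rectR a b) T) {i : ℕ} (hi : i < a) :
    b = v * vertCount T i + covCount h T i := by
  classical
  set C : Finset (ℕ × ℕ) := ({i} : Finset ℕ) ×ˢ Finset.range b with hC
  have hCsub : C ⊆ rectR a b := by
    intro c hc
    simp only [hC, Finset.mem_product, Finset.mem_singleton, Finset.mem_range,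
      rectR] at hc ⊢
    exact ⟨hc.1 ▸ hi, hc.2⟩
  have hCb : C.card = b := by simp [hC]
  have hbi : C = T.biUnion (fun t => C ∩ barCells h v t) := by
    ext c
    simp only [Finset.mem_biUnion, Finset.mem_inter]
    constructor
    · intro hc
      obtain ⟨t, ⟨htT, htc⟩, -⟩ := hT.2 c (hCsub hc)
      exact ⟨t, htT, hc, htc⟩
    · rintro ⟨t, -, hc, -⟩; exact hc
  have hdisj : ∀ t1 ∈ T, ∀ t2 ∈ T, t1 ≠ t2 →
      Disjoint (C ∩ barCells h v t1) (C ∩ barCells h v t2) := by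
    intro t1 h1 t2 h2 hne
    rw [Finset.disjoint_left]
    intro c hc1 hc2
    simp only [Finset.mem_inter] at hc1 hc2
    obtain ⟨t, -, huniq⟩ := hT.2 c (hCsub hc1.1)
    exact hne ((huniq t1 ⟨h1, hc1.2⟩).trans (huniq t2 ⟨h2, hc2.2⟩).symm)
  have hterm : ∀ t ∈ T, (C ∩ barCells h v t).card =
      (if t.1 = true ∧ t.2.1 = i then v else 0) +
      (if t.1 = false ∧ t.2.1 ≤ i ∧ i < t.2.1 + h then 1 else 0) := by
    rintro ⟨bb, x, y⟩ htT
    have hsub := hT.1 _ htT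
    cases bb with
    | true =>
      simp only [Bool.true_eq_false, false_and, if_false, and_true, add_zero,
        true_and]
      by_cases hx : x = i
      · rw [if_pos hx]
        have hbar : barCells h v (true, x, y) ⊆ C := by
          intro c hc
          have hr := hsub hc
          obtain ⟨s, hs, rfl⟩ := mem_barCells_true.mp hc
          simp only [rectR, Finset.mem_product, Finset.mem_range] at hr
          simp only [hC, Finset.mem_product, Finset.mem_singleton, Finset.mem_range]
          exact ⟨hx, hr.2⟩
        rw [Finset.inter_eq_right.mpr hbar]
        show ((Finset.range v).image (fun s => (x, y + s))).card = v
        rw [Finset.card_image_of_injective _ (by intro s1 s2 hss; simpa using hss),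
          Finset.card_range]
      · rw [if_neg hx]
        rw [Finset.card_eq_zero, Finset.eq_empty_iff_forall_notMem]
        intro c hpq
        rw [Finset.mem_inter, mem_barCells_true] at hpq
        obtain ⟨hcC, s, -, rfl⟩ := hpq
        simp only [hC, Finset.mem_product, Finset.mem_singleton] at hcC
        exact hx hcC.1
    | false =>
      simp only [Bool.false_eq_true, false_and, if_false, zero_add, true_and]
      have hy : y < b := by
        have hm : (x, y) ∈ barCells h v (false, x, y) :=
          mem_barCells_false.mpr ⟨0, hh, by simp⟩
        have := hsub hm
        simp only [rectR, Finset.mem_product, Finset.mem_range] at this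
        exact this.2
      by_cases hx : x ≤ i ∧ i < x + h
      · rw [if_pos hx]
        have heq : C ∩ barCells h v (false, x, y) = {(i, y)} := by
          ext c
          rw [Finset.mem_inter, mem_barCells_false]
          simp only [hC, Finset.mem_product, Finset.mem_singleton, Finset.mem_range]
          constructor
          · rintro ⟨⟨hp, -⟩, s, -, rfl⟩
            simp only [Prod.mk.injEq]
            exact ⟨hp, trivial⟩
          · rintro rfl
            exact ⟨⟨rfl, hy⟩, i - x, by omega, by rw [Prod.mk.injEq]; omega⟩
        rw [heq, Finset.card_singleton]
      · rw [if_neg hx]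
        rw [Finset.card_eq_zero, Finset.eq_empty_iff_forall_notMem]
        intro c hpq
        rw [Finset.mem_inter, mem_barCells_false] at hpq
        obtain ⟨hcC, s, hs, rfl⟩ := hpq
        simp only [hC, Finset.mem_product, Finset.mem_singleton, Finset.mem_range] at hcC
        exact hx (by omega)
  calc b = C.card := hCb.symm
    _ = (T.biUnion fun t => C ∩ barCells h v t).card := by rw [← hbi]
    _ = ∑ t ∈ T, (C ∩ barCells h v t).card := Finset.card_biUnion hdisj
    _ = ∑ t ∈ T, ((if t.1 = true ∧ t.2.1 = i then v else 0) +
          (if t.1 = false ∧ t.2.1 ≤ i ∧ i < t.2.1 + h then 1 else 0)) :=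
        Finset.sum_congr rfl hterm
    _ = v * vertCount T i + covCount h T i := by
        rw [Finset.sum_add_distrib, ← Finset.sum_filter, ← Finset.sum_filter]
        simp [vertCount, covCount, mul_comm]

lemma shift {h : ℕ} (hh : 1 ≤ h) (T : Finset BarP) {i : ℕ} (hi : 1 ≤ i) :
    covCount h T i + (T.filter (fun t => t.1 = false ∧ t.2.1 + h = i)).card
      = covCount h T (i - 1) + horizStartCount T i := by
  classical
  unfold covCount horizStartCount
  have d1 : Disjoint (T.filter (fun t => t.1 = false ∧ t.2.1 ≤ i ∧ i < t.2.1 + h))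
      (T.filter (fun t => t.1 = false ∧ t.2.1 + h = i)) := by
    rw [Finset.disjoint_left]
    intro t ht1 ht2
    simp only [Finset.mem_filter] at ht1 ht2
    omega
  have d2 : Disjoint (T.filter (fun t => t.1 = false ∧ t.2.1 ≤ i - 1 ∧ i - 1 < t.2.1 + h))
      (T.filter (fun t => t.1 = false ∧ t.2.1 = i)) := by
    rw [Finset.disjoint_left]
    intro t ht1 ht2
    simp only [Finset.mem_filter] at ht1 ht2
    omega
  rw [← Finset.card_union_of_disjoint d1, ← Finset.card_union_of_disjoint d2,
    ← Finset.filter_or, ← Finset.filter_or]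
  congr 1
  apply Finset.filter_congr
  intro t _
  by_cases hb : t.1 = false
  · simp only [hb, true_and]
    omega
  · simp [hb]

/-- If `h ∣ a` and `T` tiles `R_{a×b}` by horizontal bars of length `h` and vertical
bars of length `v` with equally many vertical bars in all columns of each block
`{kh,…,(k+1)h-1}`, then every horizontal bar lies entirely inside one such block,
i.e. every horizontal bar starts at a column divisible by `h`. -/
theorem stmt_17 (a b h v : ℕ) (ha : 1 ≤ a) (hb : 1 ≤ b) (hh : 1 ≤ h) (hv : 1 ≤ v)
    (hha : h ∣ a) (T : Finset BarP) (hT : IsTilingOf h v (rectR a b) T)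
    (hblock : ∀ i < a, ∀ j < a, i / h = j / h → vertCount T i = vertCount T j) :
    ∀ t ∈ T, t.1 = false → h ∣ t.2.1 := by
  classical
  have hS : ∀ i, i < a → ¬ h ∣ i → horizStartCount T i = 0 := by
    intro i
    induction i using Nat.strong_induction_on with
    | _ i ih =>
      intro hia hnd
      have hi1 : 1 ≤ i := by
        rcases Nat.eq_zero_or_pos i with h0 | hpos
        · exact absurd (h0 ▸ dvd_zero h) hnd
        · exact hpos
      have hdiv : i / h = (i - 1) / h := by
        conv_lhs => rw [show i = (i - 1) + 1 by omega]
        rw [Nat.succ_div, if_neg (by rwa [show i - 1 + 1 = i by omega]), add_zero]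
      have hm : vertCount T i = vertCount T (i - 1) :=
        hblock i hia (i - 1) (by omega) hdiv
      have e1 := colcount hh hT hia
      have e2 := colcount hh hT (show i - 1 < a by omega)
      rw [hm] at e1
      have hcov : covCount h T i = covCount h T (i - 1) :=
        Nat.add_left_cancel (e1.symm.trans e2)
      have hsh := shift hh T hi1
      have hcnt : horizStartCount T i
          = (T.filter (fun t => t.1 = false ∧ t.2.1 + h = i)).card := by omega
      by_cases hih : h ≤ i
      · have hfe : (T.filter (fun t => t.1 = false ∧ t.2.1 + h = i))
            = T.filter (fun t => t.1 = false ∧ t.2.1 = i - h) := by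
          apply Finset.filter_congr
          intro t _
          by_cases hbt : t.1 = false
          · simp only [hbt, true_and]; omega
          · simp [hbt]
        have hnd' : ¬ h ∣ (i - h) := by
          intro hd
          exact hnd (by have : i = (i - h) + h := by omega
                        rw [this]; exact Nat.dvd_add hd dvd_rfl)
        rw [hcnt, hfe]
        exact ih (i - h) (by omega) (by omega) hnd'
      · rw [hcnt, Finset.card_eq_zero, Finset.filter_eq_empty_iff]
        rintro t - ⟨-, hx⟩
        omega
  intro t htT htf
  by_contra hnd
  have hx : t.2.1 < a := by
    have hm : (t.2.1, t.2.2) ∈ barCells h v t := by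
      obtain ⟨bb, x, y⟩ := t
      cases bb
      · exact mem_barCells_false.mpr ⟨0, hh, by simp⟩
      · simp at htf
    have := hT.1 t htT hm
    simp only [rectR, Finset.mem_product, Finset.mem_range] at this
    exact this.1
  have h0 := hS t.2.1 hx hnd
  have hmem : t ∈ T.filter (fun t' => t'.1 = false ∧ t'.2.1 = t.2.1) :=
    Finset.mem_filter.mpr ⟨htT, htf, rfl⟩
  rw [horizStartCount, Finset.card_eq_zero] at h0
  rw [h0] at hmem
  exact absurd hmem (Finset.notMem_empty t)
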